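/- The functional φ is centered on the c-free Appell polynomials and its covariances with them are the two-state free cumulants: φ(Aₙ) = 0 for every n ≥ 1, and φ(A₁·Aₙ) = s_{n+1} for every n ≥ 1. -/

import Mathlib

/-!
Writing `U = w·(1+M)`, the recursion for the `Aₙ` says exactly that their generating series
`𝒜(z) = Σ Aₙ zⁿ ∈ ℂ[x]⟦z⟧` satisfies `x·z·𝒜 = (𝒜 - 1)(1 + R(z)) + S(z)`. Substituting `z = U`
and dividing by `1 + M = 1 + R(U)` turns this into `(1 - x·w)·𝒜(U) = 1 - η`, that is
`𝒜(U) = (1 - η)·Σ xᵐwᵐ`. Applying `φ` coefficientwise, which is `ℂ⟦w⟧`-linear and commutes with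
the substitution, gives `Σ φ(Aₙ) Uⁿ = (1 - η)·(1 - η)⁻¹ = 1`; since `U = w + O(w²)` is
invertible for composition, `φ(Aₙ) = 0` for `n ≥ 1`. The covariances then follow from
`A₁ = x - s₁` and the recursion for `x·Aₙ`.
-/

/-- The one-variable c-free Appell polynomials: `A₀ = 1` and
`Aₙ₊₁ = x·Aₙ − Σ_{j=1}^{n} rⱼ·A_{n+1−j} − s_{n+1}·1`. -/
noncomputable def cfAppell (r s : ℕ → ℂ) : ℕ → Polynomial ℂ
  | 0 => 1
  | n + 1 =>
      Polynomial.X * cfAppell r s n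
        - ∑ j ∈ Finset.range n, Polynomial.C (r (j + 1)) * cfAppell r s (n - j)
        - Polynomial.C (s (n + 1))
  termination_by n => n
  decreasing_by all_goals omega

/-- Substitution `Σ_{k≥1} rₖ·gᵏ` of a power series `g` with zero constant term into the
series `R(z) = Σ_{k≥1} rₖ zᵏ`, computed coefficientwise (for such `g`, the coefficient
of `wⁿ` in `Σ_{k≥1} rₖ gᵏ` is the finite sum `Σ_{k=1}^{n} rₖ·(coeff of wⁿ in gᵏ)`). -/
noncomputable def substSeries (r : ℕ → ℂ) (g : PowerSeries ℂ) : PowerSeries ℂ :=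
  PowerSeries.mk fun n => ∑ k ∈ Finset.Icc 1 n, r k * PowerSeries.coeff (R := ℂ) n (g ^ k)

open PowerSeries
open Finset hiding map

namespace PowerSeries

section Subst

variable {R : Type*} [CommRing R]

theorem coeff_pow_eq_zero_of_lt {a : R⟦X⟧} (ha : constantCoeff a = 0) {n d : ℕ} (h : n < d) :
    coeff n (a ^ d) = 0 :=
  coeff_of_lt_order _ <| (Nat.cast_lt.mpr h).trans_le <|
    (le_order_pow_of_constantCoeff_eq_zero d ha).trans' (by simp)

theorem coeff_subst_eq_sum_range {a : R⟦X⟧} (ha : constantCoeff a = 0) (f : R⟦X⟧) (n : ℕ) :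
    coeff n (f.subst a) = ∑ d ∈ range (n + 1), coeff d f * coeff n (a ^ d) := by
  rw [coeff_subst' (.of_constantCoeff_zero' ha)]
  simp_rw [smul_eq_mul]
  refine finsum_eq_sum_of_support_subset _ fun d hd => ?_
  by_contra h
  simp only [coe_range, Set.mem_Iio, not_lt] at h
  exact hd (by simp only [coeff_pow_eq_zero_of_lt ha (by omega : n < d), mul_zero])

theorem subst_one {a : R⟦X⟧} (ha : HasSubst a) : (1 : R⟦X⟧).subst a = 1 := by
  rw [← coe_substAlgHom ha, map_one]

theorem subst_injective {a : R⟦X⟧} (ha : constantCoeff a = 0) (ha' : IsUnit (coeff 1 a)) :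
    Function.Injective (subst (R := R) a) := by
  refine Function.LeftInverse.injective (g := subst (a.substInvOfIsUnit ha')) fun f => ?_
  rw [subst_comp_subst_apply (.of_constantCoeff_zero' ha) (HasSubst.substInvOfIsUnit a ha'),
    subst_substInvOfIsUnit_right a ha ha', X_subst]

theorem mk_pow_mul_one_sub_C_mul_X (x : R) : PowerSeries.mk (x ^ ·) * (1 - C x * X) = 1 := by
  ext (_ | n)
  · simp
  · simp [mul_sub, ← mul_assoc, coeff_succ_mul_X, pow_succ]

end Subst

section MapLinear

variable {K A : Type*} [CommRing K] [CommRing A] [Algebra K A]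

noncomputable def mapLinear (φ : A →ₗ[K] K) (f : A⟦X⟧) : K⟦X⟧ :=
  PowerSeries.mk fun n => φ (coeff n f)

@[simp]
theorem coeff_mapLinear (φ : A →ₗ[K] K) (f : A⟦X⟧) (n : ℕ) :
    coeff n (mapLinear φ f) = φ (coeff n f) :=
  coeff_mk _ _

theorem mapLinear_map_algebraMap_mul (φ : A →ₗ[K] K) (g : K⟦X⟧) (f : A⟦X⟧) :
    mapLinear φ (map (algebraMap K A) g * f) = g * mapLinear φ f := by
  ext n
  simp [coeff_mul, ← Algebra.smul_def]

theorem mapLinear_subst (φ : A →ₗ[K] K) {a : K⟦X⟧} (ha : constantCoeff a = 0) (f : A⟦X⟧) :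
    mapLinear φ (f.subst (map (algebraMap K A) a)) = (mapLinear φ f).subst a := by
  have ha' : constantCoeff (map (algebraMap K A) a) = 0 := by
    rw [← coeff_zero_eq_constantCoeff_apply, coeff_map, coeff_zero_eq_constantCoeff_apply, ha,
      map_zero]
  ext n
  simp [coeff_subst_eq_sum_range ha, coeff_subst_eq_sum_range ha', ← map_pow, mul_comm,
    ← Algebra.smul_def]

end MapLinear

end PowerSeries

/-- `Σ_{k≥1} tₖ zᵏ`, as in `R(z)` and `S(z)`. -/
noncomputable def cumulantSeries {K : Type*} [CommRing K] (t : ℕ → K) : K⟦X⟧ :=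
  X * PowerSeries.mk fun k => t (k + 1)

theorem substSeries_eq_subst (t : ℕ → ℂ) {g : ℂ⟦X⟧} (hg : constantCoeff g = 0) :
    substSeries t g = (cumulantSeries t).subst g := by
  ext n
  rw [coeff_subst_eq_sum_range hg, sum_range_succ', substSeries, coeff_mk,
    ← Finset.Ico_add_one_right_eq_Icc, sum_Ico_eq_sum_range]
  simp [cumulantSeries, add_comm]

noncomputable def cfAppellSeries (r s : ℕ → ℂ) : (Polynomial ℂ)⟦X⟧ :=
  PowerSeries.mk (cfAppell r s)

section CfAppell

variable (r s : ℕ → ℂ)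

theorem cfAppell_zero : cfAppell r s 0 = 1 := by
  rw [cfAppell]

theorem cfAppell_one : cfAppell r s 1 = Polynomial.X - Polynomial.C (s 1) := by
  simp [cfAppell]

theorem X_mul_cfAppell (n : ℕ) :
    Polynomial.X * cfAppell r s n
      = cfAppell r s (n + 1)
        + ∑ j ∈ range n, Polynomial.C (r (j + 1)) * cfAppell r s (n - j)
        + Polynomial.C (s (n + 1)) := by
  rw [cfAppell]
  ring

theorem coeff_cfAppellSeries_sub_one_mul_map (f : ℂ⟦X⟧) (n : ℕ) :
    coeff n ((cfAppellSeries r s - 1) * map Polynomial.C f)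
      = ∑ j ∈ range n, Polynomial.C (coeff j f) * cfAppell r s (n - j) := by
  rw [coeff_mul, Nat.sum_antidiagonal_eq_sum_range_succ (fun i j => coeff i _ * coeff j _),
    sum_range_succ', ← sum_range_reflect]
  simp only [cfAppellSeries, map_sub, coeff_mk, coeff_one, coeff_map, cfAppell_zero, if_pos,
    sub_self, zero_mul, add_zero, Nat.add_one_ne_zero, if_false, sub_zero]
  refine sum_congr rfl fun j hj => ?_
  have hj : j < n := mem_range.mp hj
  rw [show n - 1 - j + 1 = n - j by omega, Nat.sub_sub_self hj.le, mul_comm]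

theorem X_mul_C_X_mul_cfAppellSeries :
    X * (C Polynomial.X * cfAppellSeries r s)
      = (cfAppellSeries r s - 1) * (1 + map Polynomial.C (cumulantSeries r))
        + map Polynomial.C (cumulantSeries s) := by
  ext (_ | n)
  · simp [cfAppellSeries, cumulantSeries, cfAppell_zero]
  · simp only [cumulantSeries, map_mul, map_X, mul_add, mul_one, mul_left_comm _ X, map_add,
      coeff_succ_X_mul, coeff_C_mul, coeff_cfAppellSeries_sub_one_mul_map, coeff_map, coeff_mk]
    simp [cfAppellSeries, X_mul_cfAppell]

theorem map_cfAppell_one_mul_cfAppell (φ : Polynomial ℂ →ₗ[ℂ] ℂ) (hφ₁ : φ 1 = 1)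
    (hφ : ∀ n, 1 ≤ n → φ (cfAppell r s n) = 0) {n : ℕ} (hn : 1 ≤ n) :
    φ (cfAppell r s 1 * cfAppell r s n) = s (n + 1) := by
  have hsum : φ (∑ j ∈ range n, Polynomial.C (r (j + 1)) * cfAppell r s (n - j)) = 0 :=
    (map_sum φ _ _).trans <| sum_eq_zero fun j hj => by
      rw [Polynomial.C_mul', map_smul, hφ _ (by have := mem_range.mp hj; omega), smul_zero]
  rw [cfAppell_one, sub_mul, map_sub, X_mul_cfAppell, map_add, map_add, hsum,
    hφ _ (by omega), Polynomial.C_mul', map_smul, hφ n hn, ← mul_one (Polynomial.C _),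
    Polynomial.C_mul', map_smul, hφ₁]
  simp

variable {r s} {M η : ℂ⟦X⟧}

theorem one_sub_C_X_mul_X_mul_subst_cfAppellSeries (hM0 : constantCoeff M = 0)
    (hM : M = substSeries r (X * (1 + M)))
    (hη : η = (1 + M)⁻¹ * substSeries s (X * (1 + M))) :
    (1 - C Polynomial.X * X) * (cfAppellSeries r s).subst (map Polynomial.C (X * (1 + M)))
      = 1 - map Polynomial.C η := by
  set U : ℂ⟦X⟧ := X * (1 + M)
  have hU : constantCoeff U = 0 := by simp [U]
  have hV : HasSubst (map Polynomial.C U) := .of_constantCoeff_zero' (by simp [U])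
  have hsubst : ∀ t, (map Polynomial.C (cumulantSeries t)).subst (map Polynomial.C U)
      = map Polynomial.C (substSeries t U) := fun t => by
    rw [substSeries_eq_subst t hU]
    exact (map_subst (.of_constantCoeff_zero' hU) _).symm
  have key := congrArg (subst (R := Polynomial ℂ) (map Polynomial.C U))
    (X_mul_C_X_mul_cfAppellSeries r s)
  rw [subst_mul hV, subst_X hV, subst_mul hV, subst_C, subst_add hV, subst_mul hV, subst_sub hV,
    subst_add hV, hsubst, hsubst, ← hM] at key
  have hN : map Polynomial.C (1 + M)⁻¹ * map Polynomial.C (1 + M) = 1 := by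
    rw [← map_mul, PowerSeries.inv_mul_cancel _ (by simp [hM0]), map_one]
  have hUV : map Polynomial.C U = X * map Polynomial.C (1 + M) := by simp [U]
  have hCX : (MvPowerSeries.C Polynomial.X : (Polynomial ℂ)⟦X⟧) = C Polynomial.X := rfl
  set G := subst (map Polynomial.C U) (cfAppellSeries r s)
  rw [subst_one hV, hCX, hUV,
    show (1 : (Polynomial ℂ)⟦X⟧) + map Polynomial.C M = map Polynomial.C (1 + M) by simp] at key
  rw [hη, map_mul]
  linear_combination -map Polynomial.C (1 + M)⁻¹ * key + (X * C Polynomial.X * G - (G - 1)) * hN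

theorem mapLinear_cfAppellSeries (hM0 : constantCoeff M = 0)
    (hM : M = substSeries r (X * (1 + M)))
    (hη : η = (1 + M)⁻¹ * substSeries s (X * (1 + M)))
    (φ : Polynomial ℂ →ₗ[ℂ] ℂ) (hφ : ∀ m : ℕ, φ (Polynomial.X ^ m) = coeff m (1 - η)⁻¹) :
    mapLinear φ (cfAppellSeries r s) = 1 := by
  set U : ℂ⟦X⟧ := X * (1 + M)
  have hU0 : constantCoeff U = 0 := by simp [U]
  have hU1 : IsUnit (coeff 1 U) := by simp [U, hM0]
  have hη0 : constantCoeff η = 0 := by simp [hη, substSeries]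
  set G := (cfAppellSeries r s).subst (map Polynomial.C U)
  have hG : G = map (algebraMap ℂ (Polynomial ℂ)) (1 - η) * PowerSeries.mk (Polynomial.X ^ ·) := by
    rw [Polynomial.algebraMap_eq, map_sub, map_one]
    linear_combination PowerSeries.mk (Polynomial.X ^ ·) *
        one_sub_C_X_mul_X_mul_subst_cfAppellSeries hM0 hM hη -
      G * mk_pow_mul_one_sub_C_mul_X (Polynomial.X : Polynomial ℂ)
  have hφG : mapLinear φ G = 1 := by
    have hgeom : mapLinear φ (PowerSeries.mk (Polynomial.X ^ ·)) = (1 - η)⁻¹ := by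
      ext m
      simp [hφ]
    rw [hG, mapLinear_map_algebraMap_mul, hgeom, PowerSeries.mul_inv_cancel _ (by simp [hη0])]
  apply subst_injective hU0 hU1
  rw [← mapLinear_subst φ hU0, Polynomial.algebraMap_eq, hφG,
    subst_one (.of_constantCoeff_zero' hU0)]

end CfAppell

/-- with `M` the unique zero-constant-term solution of `M = R(w(1+M))`,
`η = (1+M)⁻¹·S(w(1+M))`, and `φ` the unital linear functional on `ℂ[x]` with
`φ(xⁿ) = [wⁿ](1−η)⁻¹`, the functional `φ` is centered on the c-free Appell polynomials
and its covariances with them are the two-state free cumulants: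
`φ(Aₙ) = 0` and `φ(A₁·Aₙ) = s_{n+1}` for every `n ≥ 1`. -/
theorem cfAppell_centered_and_covariances (r s : ℕ → ℂ) (M η : PowerSeries ℂ)
    (hM0 : PowerSeries.constantCoeff (R := ℂ) M = 0)
    (hM : M = substSeries r (PowerSeries.X * (1 + M)))
    (hη : η = (1 + M)⁻¹ * substSeries s (PowerSeries.X * (1 + M)))
    (φl : Polynomial ℂ →ₗ[ℂ] ℂ)
    (hφ : ∀ m : ℕ, φl (Polynomial.X ^ m) = PowerSeries.coeff (R := ℂ) m (1 - η)⁻¹) :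
    (∀ n, 1 ≤ n → φl (cfAppell r s n) = 0) ∧
      (∀ n, 1 ≤ n → φl (cfAppell r s 1 * cfAppell r s n) = s (n + 1)) := by
  have hcoeff : ∀ n, φl (cfAppell r s n) = coeff n (1 : ℂ⟦X⟧) := fun n => by
    rw [← mapLinear_cfAppellSeries hM0 hM hη φl hφ, coeff_mapLinear, cfAppellSeries, coeff_mk]
  have hcentered : ∀ n, 1 ≤ n → φl (cfAppell r s n) = 0 := fun n hn => by
    rw [hcoeff, coeff_one, if_neg (by omega)]
  have hunital : φl 1 = 1 := by simpa [cfAppell_zero] using hcoeff 0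
  exact ⟨hcentered, fun n hn => map_cfAppell_one_mul_cfAppell r s φl hunital hcentered hn⟩
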